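/- Let S ∈ ℝ and define, for x > 0, W01(x) = 2·(1 − √(1 + S²/(4x))). Then for all x_1, x_2 > 0 with x_1 ≠ x_2, the genus-zero two-point function identity holds: (1/√(1 + S²/(4x_1)))·( x_2·∂/∂x_2 + 1/2 ) applied to (W01(x_1) − W01(x_2))/(x_1 − x_2) equals (1/(2(x_1 − x_2)²))·( (S² + 2(x_1 + x_2))/(√(1 + S²/(4x_1))·√(1 + S²/(4x_2))) − 2(x_1 + x_2) ). -/

import Mathlib

noncomputable section

/-- The genus-zero one-point function of the generalized BGW model,
`W01(x) = 2·(1 − √(1 + S²/(4x)))`, solving `W01² − 4·W01 − S²/x = 0`. -/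
def W01 (S x : ℝ) : ℝ := 2*(1 - Real.sqrt (1 + S^2/(4*x)))

/-!
With `b = √(1 + S²/(4x₂))` the chain rule gives `W01'(x₂) = S²/(4x₂²b)`, and the quotient rule
gives the derivative of the divided difference as `(ΔW01 − W01'(x₂)(x₁ − x₂))/(x₁ − x₂)²`.
After clearing denominators the identity reduces to `b² = 1 + S²/(4x₂)`.
-/

theorem HasDerivAt.divided_difference {𝕜 : Type*} [NontriviallyNormedField 𝕜] {f : 𝕜 → 𝕜}
    {f' c y : 𝕜} (hf : HasDerivAt f f' y) (hy : c ≠ y) :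
    HasDerivAt (fun t => (f c - f t) / (c - t)) ((f c - f y - f' * (c - y)) / (c - y) ^ 2) y :=
  ((hf.const_sub (f c)).div ((hasDerivAt_id y).const_sub c) (sub_ne_zero.mpr hy)).congr_deriv
    (by simp only [id]; ring)

theorem hasDerivAt_W01 (S : ℝ) {x : ℝ} (hx : 0 < x) :
    HasDerivAt (W01 S) (S ^ 2 / (4 * x ^ 2 * √(1 + S ^ 2 / (4 * x)))) x := by
  have hinner : HasDerivAt (fun y => 1 + S ^ 2 / (4 * y)) (-(S ^ 2 / (4 * x ^ 2))) x :=
    (((hasDerivAt_const x (S ^ 2)).div ((hasDerivAt_id x).const_mul 4)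
      (by positivity)).const_add 1).congr_deriv (by simp only [id]; field_simp; ring)
  exact (((hinner.sqrt (by positivity)).const_sub 1).const_mul 2).congr_deriv (by field_simp)

/-- the genus-zero two-point function identity: applying
`(1/√(1+S²/(4x₁)))·(x₂·∂/∂x₂ + 1/2)` to `(W01(x₁) − W01(x₂))/(x₁ − x₂)` gives
`(1/(2(x₁−x₂)²))·((S²+2(x₁+x₂))/(√(1+S²/(4x₁))·√(1+S²/(4x₂))) − 2(x₁+x₂))`. -/
theorem genus_zero_two_point (S x₁ x₂ : ℝ) (h₁ : 0 < x₁) (h₂ : 0 < x₂)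
    (hne : x₁ ≠ x₂) :
    (1/Real.sqrt (1 + S^2/(4*x₁))) *
      (x₂ * deriv (fun y => (W01 S x₁ - W01 S y)/(x₁ - y)) x₂
        + (1/2) * ((W01 S x₁ - W01 S x₂)/(x₁ - x₂)))
    = (1/(2*(x₁ - x₂)^2)) *
        ((S^2 + 2*(x₁ + x₂)) /
            (Real.sqrt (1 + S^2/(4*x₁)) * Real.sqrt (1 + S^2/(4*x₂)))
          - 2*(x₁ + x₂)) := by
  rw [((hasDerivAt_W01 S h₂).divided_difference hne).deriv]
  simp only [W01]
  have hb : √(1 + S ^ 2 / (4 * x₂)) ^ 2 = 1 + S ^ 2 / (4 * x₂) := Real.sq_sqrt (by positivity)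
  have ha0 : 0 < √(1 + S ^ 2 / (4 * x₁)) := by positivity
  have hb0 : 0 < √(1 + S ^ 2 / (4 * x₂)) := by positivity
  have hx : x₁ - x₂ ≠ 0 := sub_ne_zero.mpr hne
  field_simp at hb ⊢
  linear_combination 2 * (x₁ + x₂) * hb
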